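/- arXiv:0808.0353 — 5 statements merged into one kernel-verified Lean document; each statement's English description precedes it below -/
import Mathlib

section
/- Let {(p_k, U_k)}_{k=1}^N be an ensemble of unitaries on C^d such that the map T(ω) = ∑_k p_k (U_k ⊗ Ū_k)† ω (U_k ⊗ Ū_k) equals the U⊗Ū-twirl T_{U⊗Ū} (i.e., the ensemble is a unitary 2-design). Then for every density matrix ρ on C^d, ∑_k p_k U_k ρ U_k† = I/d, i.e., the ensemble is a unitary 1-design (perfect encryption). -/
/-!
Pass to the Heisenberg picture. Conjugating `M ⊗ I` by `U ⊗ Ū` gives `U†MU ⊗ I`, and the twirl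
of `M ⊗ I` is `(tr M / d) I`; so the 2-design identity at `X = M ⊗ I` says that the dual map
`M ↦ ∑ p_k U_k† M U_k` is the completely depolarizing map `M ↦ (tr M / d) I`. By trace duality,
`tr(A ∑ p_k U_k ρ U_k†) = tr((∑ p_k U_k† A U_k) ρ) = tr A / d` for every `A`, which pins
`∑ p_k U_k ρ U_k†` down to `I / d` once `tr ρ = 1`.
-/

open Matrix Kronecker BigOperators
open scoped ComplexOrder

/-- The maximally entangled state projector `Φ_d = (1/d) ∑_{i,j} |ii⟩⟨jj|` on `ℂ^d ⊗ ℂ^d`. -/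
noncomputable def maxEnt (d : ℕ) : Matrix (Fin d × Fin d) (Fin d × Fin d) ℂ :=
  (1 / (d : ℂ)) • Matrix.of (fun p q => if p.1 = p.2 ∧ q.1 = q.2 then 1 else 0)

/-- Entrywise complex conjugate of a matrix. -/
def conjMat {d : ℕ} (U : Matrix (Fin d) (Fin d) ℂ) : Matrix (Fin d) (Fin d) ℂ :=
  U.map (starRingEnd ℂ)

/-- The `U ⊗ Ū`-twirl: projection onto the isotropic operators. -/
noncomputable def twirl {d : ℕ} (X : Matrix (Fin d × Fin d) (Fin d × Fin d) ℂ) :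
    Matrix (Fin d × Fin d) (Fin d × Fin d) ℂ :=
  (X * maxEnt d).trace • maxEnt d +
    ((X * (1 - maxEnt d)).trace / ((d : ℂ) ^ 2 - 1)) • (1 - maxEnt d)

section

variable {n R : Type*} [Fintype n]

theorem conjTranspose_kronecker_mul_kronecker_one_mul [DecidableEq n] [CommRing R] [StarRing R]
    (V : Matrix n n R) {W : Matrix n n R} (hW : W ∈ unitaryGroup n R) (M : Matrix n n R) :
    (V ⊗ₖ W)ᴴ * (M ⊗ₖ (1 : Matrix n n R)) * (V ⊗ₖ W) = (Vᴴ * M * V) ⊗ₖ (1 : Matrix n n R) := by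
  rw [conjTranspose_kronecker, ← mul_kronecker_mul, ← mul_kronecker_mul, mul_one,
    show Wᴴ * W = 1 from hW.1]

theorem trace_mul_sum_smul_mul_mul [CommSemiring R] {ι : Type*} [Fintype ι] (c : ι → R)
    (V W : ι → Matrix n n R) (A ρ : Matrix n n R) :
    (A * ∑ k, c k • (V k * ρ * W k)).trace = ((∑ k, c k • (W k * A * V k)) * ρ).trace := by
  simp only [Matrix.mul_sum, Matrix.sum_mul, trace_sum, Matrix.mul_smul, Matrix.smul_mul,
    trace_smul]
  refine Finset.sum_congr rfl fun k _ => congrArg _ ?_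
  rw [← Matrix.mul_assoc, ← Matrix.mul_assoc, trace_mul_comm]
  simp only [Matrix.mul_assoc]

end

theorem conjMat_mem_unitaryGroup {d : ℕ} {V : Matrix (Fin d) (Fin d) ℂ}
    (hV : V ∈ unitaryGroup (Fin d) ℂ) : conjMat V ∈ unitaryGroup (Fin d) ℂ :=
  map_star_mem_unitaryGroup_iff.mpr hV

theorem maxEnt_one : maxEnt 1 = 1 := by
  ext p q
  simp [maxEnt, Subsingleton.elim p q, Subsingleton.elim q.1 q.2, one_apply]

theorem trace_kronecker_one_mul_maxEnt {d : ℕ} (M : Matrix (Fin d) (Fin d) ℂ) :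
    ((M ⊗ₖ (1 : Matrix (Fin d) (Fin d) ℂ)) * maxEnt d).trace = M.trace / d := by
  simp [maxEnt, trace, mul_apply, Fintype.sum_prod_type, one_apply, ite_and, div_eq_mul_inv,
    Finset.sum_mul]

theorem twirl_kronecker_one {d : ℕ} [NeZero d] (M : Matrix (Fin d) (Fin d) ℂ) :
    twirl (M ⊗ₖ (1 : Matrix (Fin d) (Fin d) ℂ)) = (M.trace / d) • 1 := by
  have hd : (d : ℂ) ≠ 0 := NeZero.ne _
  have h_perp : ((M ⊗ₖ (1 : Matrix (Fin d) (Fin d) ℂ)) * (1 - maxEnt d)).trace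
      = M.trace / d * ((d : ℂ) ^ 2 - 1) := by
    rw [Matrix.mul_sub, Matrix.mul_one, trace_sub, trace_kronecker, trace_kronecker_one_mul_maxEnt,
      trace_one, Fintype.card_fin]
    field_simp
  -- for `d = 1` the coefficient is `0 / 0`, but then `1 - maxEnt d = 0`
  have h_coeff : (M.trace / d * ((d : ℂ) ^ 2 - 1) / ((d : ℂ) ^ 2 - 1)) • (1 - maxEnt d)
      = (M.trace / d) • (1 - maxEnt d) := by
    obtain h1 | h1 := eq_or_ne ((d : ℂ) ^ 2 - 1) 0
    · obtain rfl : d = 1 := by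
        simpa using (show d ^ 2 = 1 by exact_mod_cast sub_eq_zero.mp h1)
      simp [maxEnt_one]
    · rw [mul_div_cancel_right₀ _ h1]
  rw [twirl, trace_kronecker_one_mul_maxEnt, h_perp, h_coeff, ← smul_add, add_sub_cancel]

theorem sum_smul_conjTranspose_mul_mul_of_design {d N : ℕ} [NeZero d] (p : Fin N → ℝ)
    {U : Fin N → Matrix (Fin d) (Fin d) ℂ} (hU : ∀ k, U k ∈ unitaryGroup (Fin d) ℂ)
    (hdesign : ∀ X : Matrix (Fin d × Fin d) (Fin d × Fin d) ℂ,
      ∑ k, (p k : ℂ) • ((U k ⊗ₖ conjMat (U k))ᴴ * X * (U k ⊗ₖ conjMat (U k))) = twirl X)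
    (M : Matrix (Fin d) (Fin d) ℂ) :
    ∑ k, (p k : ℂ) • ((U k)ᴴ * M * U k) = (M.trace / d) • 1 := by
  have h := hdesign (M ⊗ₖ 1)
  simp only [conjTranspose_kronecker_mul_kronecker_one_mul _ (conjMat_mem_unitaryGroup (hU _)),
    twirl_kronecker_one] at h
  ext i j
  simpa [Matrix.sum_apply, one_apply] using congr_fun₂ h (i, 0) (j, 0)

theorem two_design_is_one_design_general {d N : ℕ}
    (p : Fin N → ℝ)
    (U : Fin N → Matrix (Fin d) (Fin d) ℂ)
    (hU : ∀ k, U k ∈ Matrix.unitaryGroup (Fin d) ℂ)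
    (hdesign : ∀ X : Matrix (Fin d × Fin d) (Fin d × Fin d) ℂ,
      ∑ k, (p k : ℂ) • ((U k ⊗ₖ conjMat (U k))ᴴ * X * (U k ⊗ₖ conjMat (U k))) = twirl X)
    (ρ : Matrix (Fin d) (Fin d) ℂ) (hρ1 : ρ.trace = 1) :
    ∑ k, (p k : ℂ) • (U k * ρ * (U k)ᴴ) = (1 / (d : ℂ)) • 1 := by
  obtain rfl | hd := eq_or_ne d 0
  · exact Subsingleton.elim _ _
  have : NeZero d := ⟨hd⟩
  refine ext_iff_trace_mul_left.mpr fun A => ?_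
  rw [trace_mul_sum_smul_mul_mul, sum_smul_conjTranspose_mul_mul_of_design p hU hdesign]
  simp [hρ1, div_eq_mul_inv, mul_comm]

/-- Every unitary 2-design is a unitary 1-design: if the ensemble `{(p_k, U_k)}`
implements the `U ⊗ Ū`-twirl, then it encrypts every density matrix to `I/d`. -/
theorem two_design_is_one_design {d N : ℕ}
    (p : Fin N → ℝ) (hp : ∀ k, 0 ≤ p k) (hp1 : ∑ k, p k = 1)
    (U : Fin N → Matrix (Fin d) (Fin d) ℂ)
    (hU : ∀ k, U k ∈ Matrix.unitaryGroup (Fin d) ℂ)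
    (hdesign : ∀ X : Matrix (Fin d × Fin d) (Fin d × Fin d) ℂ,
      ∑ k, (p k : ℂ) • ((U k ⊗ₖ conjMat (U k))ᴴ * X * (U k ⊗ₖ conjMat (U k))) = twirl X)
    (ρ : Matrix (Fin d) (Fin d) ℂ) (hρ : ρ.PosSemidef) (hρ1 : ρ.trace = 1) :
    ∑ k, (p k : ℂ) • (U k * ρ * (U k)ᴴ) = (1 / (d : ℂ)) • 1 :=
  two_design_is_one_design_general p U hU hdesign ρ hρ1
end

section
/- Let {(p_k, U_k)}_{k=1}^N be a unitary 2-design on C^d (d ≥ 2). Then N ≥ (d²−1)² + 1. -/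
open Matrix Kronecker BigOperators

/-!
By the design identity, the Choi matrix of the twirl equals that of `X ↦ ∑ₖ pₖ Wₖ X Wₖᴴ`, which is
`∑ₖ pₖ wₖ wₖᴴ` with `wₖ` the vectorisation of `Wₖ = Uₖ ⊗ Ūₖ`; so its rank is at most `N`.
On the other hand it equals `Φ ⊗ Φ + (d² - 1)⁻¹ (1 - Φ) ⊗ (1 - Φ)` for the rank-one projection
`Φ = Φ_d`. The two Kronecker squares are orthogonal idempotents, so its rank is that of their sum,
namely the trace `(tr Φ)² + (tr (1 - Φ))² = 1 + (d² - 1)²`.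
-/

namespace Matrix

section Rank
variable {K : Type*} [Field K] {m n ι : Type*} [Fintype n]

theorem rank_sum_vecMulVec_le [Fintype ι] (w : ι → m → K) (v : ι → n → K) :
    (∑ k, vecMulVec (w k) (v k)).rank ≤ Fintype.card ι := by
  have : ∑ k, vecMulVec (w k) (v k) = (of fun i k => w k i) * of fun k j => v k j := by
    ext i j; simp [Matrix.sum_apply, vecMulVec_apply, mul_apply]
  rw [this]
  exact (rank_mul_le_left _ _).trans (rank_le_card_width _)

variable [DecidableEq n]

theorem natCast_rank_of_isIdempotentElem {A : Matrix n n K} (hA : IsIdempotentElem A) :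
    (A.rank : K) = A.trace := by
  have h : IsIdempotentElem A.toLin' := hA.map Matrix.toLinAlgEquiv'
  rw [rank, ← toLin'_apply', ← (LinearMap.IsIdempotentElem.isProj_range _ h).trace,
    trace_toLin'_eq]

theorem rank_add_smul_of_mul_eq_zero {E F : Matrix n n K} (hE : IsIdempotentElem E)
    (hF : IsIdempotentElem F) (hEF : E * F = 0) (hFE : F * E = 0) {c : K} (hc : c ≠ 0) :
    (E + c • F).rank = (E + F).rank := by
  have key : ∀ a b : K, (E + a • F) * (E + b • F) = E + (a * b) • F := by
    intro a b
    simp only [add_mul, mul_add, smul_mul_assoc, mul_smul_comm, smul_smul, hE.eq, hF.eq, hEF,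
      hFE, smul_zero, add_zero, zero_add, mul_comm b a]
  apply le_antisymm
  · have h := rank_mul_le_left (E + (1 : K) • F) (E + c • F)
    rwa [key, one_mul, one_smul] at h
  · have h := rank_mul_le_left (E + c • F) (E + c⁻¹ • F)
    rwa [key, mul_inv_cancel₀ hc, one_smul] at h

theorem natCast_rank_kronecker_add_smul_kronecker {E : Matrix n n K} (hE : IsIdempotentElem E)
    {c : K} (hc : c ≠ 0) :
    ((E ⊗ₖ E + c • ((1 - E) ⊗ₖ (1 - E))).rank : K) = E.trace ^ 2 + (1 - E).trace ^ 2 := by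
  have hF := hE.one_sub
  have kron_idem : ∀ {A : Matrix n n K}, IsIdempotentElem A → IsIdempotentElem (A ⊗ₖ A) :=
    fun hA => by rw [IsIdempotentElem, ← mul_kronecker_mul, hA.eq]
  have hEF : E ⊗ₖ E * (1 - E) ⊗ₖ (1 - E) = 0 := by
    rw [← mul_kronecker_mul, hE.mul_one_sub_self, zero_kronecker]
  have hFE : (1 - E) ⊗ₖ (1 - E) * E ⊗ₖ E = 0 := by
    rw [← mul_kronecker_mul, hE.one_sub_mul_self, zero_kronecker]
  rw [rank_add_smul_of_mul_eq_zero (kron_idem hE) (kron_idem hF) hEF hFE hc,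
    natCast_rank_of_isIdempotentElem ((kron_idem hE).add (kron_idem hF) (by simp [hEF, hFE])),
    trace_add, trace_kronecker, trace_kronecker, sq, sq]

end Rank

section Choi
variable {R : Type*} [CommSemiring R] {m n : Type*} [DecidableEq m]

def choiMatrix : (Matrix m m R → Matrix n n R) →ₗ[R] Matrix (m × n) (m × n) R where
  toFun Φ := of fun x y => Φ (single x.1 y.1 1) x.2 y.2
  map_add' _ _ := rfl
  map_smul' _ _ := rfl

@[simp]
theorem choiMatrix_apply (Φ : Matrix m m R → Matrix n n R) (x y : m × n) :
    choiMatrix Φ x y = Φ (single x.1 y.1 1) x.2 y.2 :=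
  rfl

theorem choiMatrix_mul_mul [Fintype m] (V : Matrix n m R) (V' : Matrix m n R) :
    choiMatrix (fun X => V * X * V') = vecMulVec (fun x => V x.2 x.1) (fun y => V' y.1 y.2) := by
  ext x y
  simp [vecMulVec_apply, mul_apply, single, ite_and]

theorem choiMatrix_trace_mul_smul [Fintype m] (A : Matrix m m R) (B : Matrix n n R) :
    choiMatrix (fun X => (X * A).trace • B) = Aᵀ ⊗ₖ B := by
  ext x y
  simp [trace_single_mul]

theorem rank_choiMatrix_sum_smul_mul_mul_le {K : Type*} [Field K] [Fintype m] [Fintype n]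
    {ι : Type*} [Fintype ι] (c : ι → K) (V : ι → Matrix n m K) (V' : ι → Matrix m n K) :
    (choiMatrix (∑ k, c k • fun X : Matrix m m K => V k * X * V' k)).rank ≤ Fintype.card ι := by
  have h : ∀ k, choiMatrix (c k • fun X : Matrix m m K => V k * X * V' k) =
      vecMulVec (c k • fun x => V k x.2 x.1) (fun y => V' k y.1 y.2) := fun k => by
    rw [LinearMap.map_smul, choiMatrix_mul_mul, smul_vecMulVec]
  rw [map_sum, Finset.sum_congr rfl fun k _ => h k]
  exact rank_sum_vecMulVec_le _ _

end Choi

end Matrix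

section TwoDesign
variable {d : ℕ}

def maxEntVec (d : ℕ) : Fin d × Fin d → ℂ := fun x => if x.1 = x.2 then 1 else 0

theorem maxEntVec_dotProduct_self : maxEntVec d ⬝ᵥ maxEntVec d = d := by
  simp [maxEntVec, dotProduct, Fintype.sum_prod_type]

theorem maxEnt_eq_smul_vecMulVec :
    maxEnt d = (d : ℂ)⁻¹ • vecMulVec (maxEntVec d) (maxEntVec d) := by
  ext x y
  by_cases x.1 = x.2 <;> by_cases y.1 = y.2 <;> simp [maxEnt, maxEntVec, vecMulVec_apply, *]

theorem maxEnt_transpose : (maxEnt d)ᵀ = maxEnt d := by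
  ext x y
  simp [maxEnt, and_comm]

theorem isIdempotentElem_maxEnt : IsIdempotentElem (maxEnt d) := by
  rw [IsIdempotentElem, maxEnt_eq_smul_vecMulVec, smul_mul_smul_comm, vecMulVec_mul_vecMulVec,
    maxEntVec_dotProduct_self, vecMulVec_smul, smul_smul]
  field_simp

theorem trace_maxEnt (hd : d ≠ 0) : (maxEnt d).trace = 1 := by
  rw [maxEnt_eq_smul_vecMulVec, trace_smul, trace_vecMulVec, maxEntVec_dotProduct_self,
    smul_eq_mul]
  field_simp

theorem trace_one_sub_maxEnt (hd : d ≠ 0) : (1 - maxEnt d).trace = (d : ℂ) ^ 2 - 1 := by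
  rw [trace_sub, trace_one, trace_maxEnt hd]
  simp [sq]

theorem twirl_eq : twirl = (fun X => (X * maxEnt d).trace • maxEnt d) +
    ((d : ℂ) ^ 2 - 1)⁻¹ • fun X => (X * (1 - maxEnt d)).trace • (1 - maxEnt d) := by
  ext X : 1
  simp [twirl, div_eq_inv_mul, smul_smul]

theorem choiMatrix_twirl : choiMatrix (twirl (d := d)) =
    maxEnt d ⊗ₖ maxEnt d + ((d : ℂ) ^ 2 - 1)⁻¹ • ((1 - maxEnt d) ⊗ₖ (1 - maxEnt d)) := by
  rw [twirl_eq, map_add, map_smul, choiMatrix_trace_mul_smul, choiMatrix_trace_mul_smul,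
    transpose_sub, transpose_one, maxEnt_transpose]

theorem rank_choiMatrix_twirl (hd : 2 ≤ d) :
    (choiMatrix (twirl (d := d))).rank = (d ^ 2 - 1) ^ 2 + 1 := by
  have hd0 : d ≠ 0 := by omega
  have hc : ((d : ℂ) ^ 2 - 1)⁻¹ ≠ 0 := by
    exact inv_ne_zero (sub_ne_zero.mpr (by exact_mod_cast (by nlinarith : d ^ 2 ≠ 1)))
  apply Nat.cast_injective (R := ℂ)
  rw [choiMatrix_twirl, natCast_rank_kronecker_add_smul_kronecker isIdempotentElem_maxEnt hc,
    trace_maxEnt hd0, trace_one_sub_maxEnt hd0]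
  push_cast [Nat.one_le_pow _ _ (by omega : 0 < d)]
  ring

end TwoDesign

theorem two_design_size_lower_bound_general {d N : ℕ} (hd : 2 ≤ d)
    (p : Fin N → ℝ)
    (U : Fin N → Matrix (Fin d) (Fin d) ℂ)
    (hdesign : ∀ X : Matrix (Fin d × Fin d) (Fin d × Fin d) ℂ,
      ∑ k, (p k : ℂ) • ((U k ⊗ₖ conjMat (U k)) * X * (U k ⊗ₖ conjMat (U k))ᴴ) = twirl X) :
    (d ^ 2 - 1) ^ 2 + 1 ≤ N := by
  set W := fun k => U k ⊗ₖ conjMat (U k)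
  have hΦ : ∑ k, (p k : ℂ) • (fun X => W k * X * (W k)ᴴ) = twirl :=
    funext fun X => by simpa [Finset.sum_apply] using hdesign X
  calc (d ^ 2 - 1) ^ 2 + 1 = (choiMatrix (twirl (d := d))).rank := (rank_choiMatrix_twirl hd).symm
    _ ≤ Fintype.card (Fin N) := hΦ ▸ rank_choiMatrix_sum_smul_mul_mul_le _ _ _
    _ = N := Fintype.card_fin N

/-- Any unitary 2-design in dimension `d ≥ 2` has at least `(d²−1)² + 1` elements. -/
theorem two_design_size_lower_bound {d N : ℕ} (hd : 2 ≤ d)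
    (p : Fin N → ℝ) (hp : ∀ k, 0 ≤ p k) (hp1 : ∑ k, p k = 1)
    (U : Fin N → Matrix (Fin d) (Fin d) ℂ)
    (hU : ∀ k, U k ∈ Matrix.unitaryGroup (Fin d) ℂ)
    (hdesign : ∀ X : Matrix (Fin d × Fin d) (Fin d × Fin d) ℂ,
      ∑ k, (p k : ℂ) • ((U k ⊗ₖ conjMat (U k)) * X * (U k ⊗ₖ conjMat (U k))ᴴ) = twirl X) :
    (d ^ 2 - 1) ^ 2 + 1 ≤ N :=
  two_design_size_lower_bound_general hd p U hdesign
end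

section
/- Let ρ, σ be density matrices on a Hilbert space of dimension D with ‖ρ − σ‖₁ ≤ θ ≤ 1/e. Then |S(ρ) − S(σ)| ≤ θ log D + H₂(θ), where S is von Neumann entropy and H₂ binary entropy (Fannes' inequality). -/
open Matrix BigOperators
open scoped ComplexOrder

noncomputable def vnEntropy {D : ℕ} {ρ : Matrix (Fin D) (Fin D) ℂ}
    (h : ρ.IsHermitian) : ℝ :=
  ∑ i, Real.negMulLog (h.eigenvalues i)

noncomputable def traceNormH {D : ℕ} {A : Matrix (Fin D) (Fin D) ℂ}
    (h : A.IsHermitian) : ℝ :=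
  ∑ i, |h.eigenvalues i|

noncomputable def binEnt (x : ℝ) : ℝ := Real.negMulLog x + Real.negMulLog (1 - x)

/-!
Write `η = negMulLog`. Weyl's monotonicity principle `A ≤ B → λₖ(A) ≤ λₖ(B)` for the decreasingly
sorted eigenvalues follows from the Courant–Fischer dimension count. If `ρ - σ = P - N` is the
Jordan decomposition, then `λₖ(ρ)` and `λₖ(σ)` are both at most `λₖ(ρ + N) = λₖ(σ + P)`, and summing
over `k` gives `∑ₖ |λₖ(ρ) - λₖ(σ)| ≤ tr P + tr N = ‖ρ - σ‖₁`. This reduces the statement to the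
classical Fannes inequality for the two eigenvalue distributions, which combines the pointwise
bound `|η(a) - η(b)| ≤ η(|a - b|)` (valid for `|a - b| ≤ 1/e`) with Jensen's inequality for the
concave `η`: `∑ₖ η(εₖ) ≤ s log D + η(s)` where `s = ∑ₖ εₖ`.
-/

open Finset Module Submodule
open scoped InnerProductSpace

namespace Real

theorem monotoneOn_negMulLog : MonotoneOn negMulLog (Set.Icc 0 (exp (-1))) := by
  refine monotoneOn_of_deriv_nonneg (convex_Icc _ _) continuous_negMulLog.continuousOn
    (differentiableOn_negMulLog.mono ?_) fun x hx => ?_ <;> rw [interior_Icc] at *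
  · exact fun x hx => hx.1.ne'
  rw [deriv_negMulLog hx.1.ne']
  linarith [(log_le_iff_le_exp hx.1).2 hx.2.le]

theorem self_le_negMulLog {x : ℝ} (h0 : 0 ≤ x) (h : x ≤ exp (-1)) : x ≤ negMulLog x := by
  rcases h0.eq_or_lt with rfl | hx
  · simp
  have := (log_le_iff_le_exp hx).2 h
  rw [negMulLog]
  nlinarith

theorem negMulLog_add_le {a b : ℝ} (ha : 0 ≤ a) (hb : 0 ≤ b) :
    negMulLog (a + b) ≤ negMulLog a + negMulLog b := by
  rcases ha.eq_or_lt with rfl | ha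
  · simp
  rcases hb.eq_or_lt with rfl | hb
  · simp
  have h1 := log_le_log ha (le_add_of_nonneg_right hb.le)
  have h2 := log_le_log hb (le_add_of_nonneg_left ha.le)
  simp only [negMulLog]
  nlinarith

theorem negMulLog_sub_negMulLog_add_le {a t : ℝ} (ha : 0 ≤ a) (ht : 0 ≤ t) (hat : a + t ≤ 1)
    (hte : t ≤ exp (-1)) : negMulLog a - negMulLog (a + t) ≤ negMulLog t := by
  rcases ha.eq_or_lt with rfl | ha
  · simpa using negMulLog_nonneg ht (by linarith)
  have hat0 : 0 < a + t := by linarith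
  have hlog_ratio : a * (log (a + t) - log a) ≤ t := by
    calc a * (log (a + t) - log a) = a * log ((a + t) / a) := by
          rw [log_div hat0.ne' ha.ne']
      _ ≤ a * ((a + t) / a - 1) :=
          mul_le_mul_of_nonneg_left (log_le_sub_one_of_pos (by positivity)) ha.le
      _ = t := by field_simp; ring
  have hlog_neg : t * log (a + t) ≤ 0 := mul_nonpos_of_nonneg_of_nonpos ht (log_nonpos hat0.le hat)
  have : negMulLog a - negMulLog (a + t) = a * (log (a + t) - log a) + t * log (a + t) := by
    simp only [negMulLog]; ring
  linarith [self_le_negMulLog ht hte]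

theorem abs_negMulLog_sub_le {a b : ℝ} (ha : 0 ≤ a) (hb : 0 ≤ b) (ha1 : a ≤ 1) (hb1 : b ≤ 1)
    (hab : |a - b| ≤ exp (-1)) : |negMulLog a - negMulLog b| ≤ negMulLog |a - b| := by
  wlog hba : b ≤ a generalizing a b
  · rw [abs_sub_comm, abs_sub_comm a]
    exact this hb ha hb1 ha1 (by rwa [abs_sub_comm]) (le_of_not_ge hba)
  obtain ⟨t, ht, rfl⟩ : ∃ t, 0 ≤ t ∧ a = b + t := ⟨a - b, by linarith, by ring⟩
  rw [add_sub_cancel_left, abs_of_nonneg ht] at *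
  rw [abs_sub_le_iff]
  exact ⟨by linarith [negMulLog_add_le hb ht], negMulLog_sub_negMulLog_add_le hb ht ha1 hab⟩

theorem sum_negMulLog_le {ι : Type*} [Fintype ι] (p : ι → ℝ) (hp : ∀ i, 0 ≤ p i) :
    ∑ i, negMulLog (p i) ≤ (∑ i, p i) * log (Fintype.card ι) + negMulLog (∑ i, p i) := by
  rcases isEmpty_or_nonempty ι with hι | hι
  · simp
  set d : ℝ := (Fintype.card ι : ℝ)
  have hd : 0 < d := by positivity
  have jensen := concaveOn_negMulLog.le_map_sum (t := univ) (w := fun _ => d⁻¹) (p := p)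
    (fun _ _ => by positivity) (by simp [d]) (fun i _ => hp i)
  rw [← smul_sum, ← smul_sum, smul_eq_mul, smul_eq_mul, negMulLog_mul, negMulLog,
    log_inv] at jensen
  have := mul_le_mul_of_nonneg_left jensen hd.le
  field_simp at this
  linarith

theorem abs_sum_negMulLog_sub_sum_negMulLog_le {ι : Type*} [Fintype ι] {p q : ι → ℝ}
    (hp : ∀ i, 0 ≤ p i) (hq : ∀ i, 0 ≤ q i) (hp1 : ∑ i, p i = 1) (hq1 : ∑ i, q i = 1) {θ : ℝ}
    (hpq : ∑ i, |p i - q i| ≤ θ) (hθ : θ ≤ exp (-1)) :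
    |∑ i, negMulLog (p i) - ∑ i, negMulLog (q i)| ≤
      θ * log (Fintype.card ι) + negMulLog θ := by
  have le_one {r : ι → ℝ} (hr : ∀ i, 0 ≤ r i) (hr1 : ∑ i, r i = 1) (i : ι) : r i ≤ 1 :=
    hr1 ▸ single_le_sum (fun j _ => hr j) (mem_univ i)
  have hdist_nonneg : 0 ≤ ∑ i, |p i - q i| := sum_nonneg fun i _ => abs_nonneg _
  have hdist_small (i : ι) : |p i - q i| ≤ exp (-1) :=
    (single_le_sum (fun j _ => abs_nonneg (p j - q j)) (mem_univ i)).trans (hpq.trans hθ)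
  calc |∑ i, negMulLog (p i) - ∑ i, negMulLog (q i)|
      ≤ ∑ i, |negMulLog (p i) - negMulLog (q i)| := by
        rw [← sum_sub_distrib]; exact abs_sum_le_sum_abs _ _
    _ ≤ ∑ i, negMulLog |p i - q i| := sum_le_sum fun i _ =>
        abs_negMulLog_sub_le (hp i) (hq i) (le_one hp hp1 i) (le_one hq hq1 i) (hdist_small i)
    _ ≤ (∑ i, |p i - q i|) * log (Fintype.card ι) + negMulLog (∑ i, |p i - q i|) :=
        sum_negMulLog_le _ fun i => abs_nonneg _
    _ ≤ θ * log (Fintype.card ι) + negMulLog θ := by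
        gcongr
        exact monotoneOn_negMulLog ⟨hdist_nonneg, hpq.trans hθ⟩ ⟨hdist_nonneg.trans hpq, hθ⟩ hpq

end Real

theorem Module.Basis.finrank_span_image_finset {K V ι : Type*} [DivisionRing K] [AddCommGroup V]
    [Module K V] (b : Basis ι K V) (s : Finset ι) :
    finrank K (span K (b '' s)) = s.card := by
  classical
  rw [finrank_span_set_eq_card (b.linearIndependent.linearIndepOn _).id_image,
    Set.toFinset_image, Finset.toFinset_coe, card_image_of_injective _ b.injective]

namespace OrthonormalBasis

variable {𝕜 E ι : Type*} [RCLike 𝕜] [NormedAddCommGroup E] [InnerProductSpace 𝕜 E] [Fintype ι]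
  (b : OrthonormalBasis ι 𝕜 E)

theorem finrank_span_image_finset (s : Finset ι) : finrank 𝕜 (span 𝕜 (b '' s)) = s.card := by
  rw [← b.coe_toBasis, b.toBasis.finrank_span_image_finset]

theorem repr_apply_eq_zero_of_mem_span {s : Set ι} {x : E} (hx : x ∈ span 𝕜 (b '' s)) {i : ι}
    (hi : i ∉ s) : b.repr x i = 0 := by
  rw [← b.coe_toBasis] at hx
  rw [← b.coe_toBasis_repr_apply, ← Finsupp.notMem_support_iff]
  exact fun h => hi (b.toBasis.repr_support_subset_of_mem_span s hx h)

theorem sum_sq_norm_repr (x : E) : ∑ i, ‖b.repr x i‖ ^ 2 = ‖x‖ ^ 2 := by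
  simp_rw [b.repr_apply_apply]
  exact b.sum_sq_norm_inner_right x

end OrthonormalBasis

namespace LinearMap.IsSymmetric

variable {𝕜 E : Type*} [RCLike 𝕜] [NormedAddCommGroup E] [InnerProductSpace 𝕜 E]
  [FiniteDimensional 𝕜 E] {n : ℕ} (hn : finrank 𝕜 E = n) {T : E →ₗ[𝕜] E} (hT : T.IsSymmetric)

theorem re_inner_apply_self_eq_sum (x : E) :
    RCLike.re ⟪T x, x⟫_𝕜 =
      ∑ i, hT.eigenvalues hn i * ‖(hT.eigenvectorBasis hn).repr x i‖ ^ 2 := by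
  rw [← (hT.eigenvectorBasis hn).repr.inner_map_map, PiLp.inner_apply, map_sum]
  refine sum_congr rfl fun i _ => ?_
  rw [eigenvectorBasis_apply_self_apply, ← smul_eq_mul, inner_smul_real_left,
    inner_self_eq_norm_sq_to_K]
  simp only [RCLike.smul_re, RCLike.re_ofReal_pow]

theorem eigenvalues_mul_norm_sq_le_re_inner {k : Fin n} {x : E}
    (hx : x ∈ span 𝕜 (hT.eigenvectorBasis hn '' Set.Iic k)) :
    hT.eigenvalues hn k * ‖x‖ ^ 2 ≤ RCLike.re ⟪T x, x⟫_𝕜 := by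
  rw [hT.re_inner_apply_self_eq_sum hn, ← (hT.eigenvectorBasis hn).sum_sq_norm_repr, mul_sum]
  refine sum_le_sum fun i _ => ?_
  by_cases hi : i ≤ k
  · gcongr
    exact hT.eigenvalues_antitone hn hi
  · simp [(hT.eigenvectorBasis hn).repr_apply_eq_zero_of_mem_span hx hi]

theorem re_inner_le_eigenvalues_mul_norm_sq {k : Fin n} {x : E}
    (hx : x ∈ span 𝕜 (hT.eigenvectorBasis hn '' Set.Ici k)) :
    RCLike.re ⟪T x, x⟫_𝕜 ≤ hT.eigenvalues hn k * ‖x‖ ^ 2 := by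
  rw [hT.re_inner_apply_self_eq_sum hn, ← (hT.eigenvectorBasis hn).sum_sq_norm_repr, mul_sum]
  refine sum_le_sum fun i _ => ?_
  by_cases hi : k ≤ i
  · gcongr
    exact hT.eigenvalues_antitone hn hi
  · simp [(hT.eigenvectorBasis hn).repr_apply_eq_zero_of_mem_span hx hi]

theorem eigenvalues_le_of_le {S : E →ₗ[𝕜] E} (hS : S.IsSymmetric) (hTS : T ≤ S) (k : Fin n) :
    hT.eigenvalues hn k ≤ hS.eigenvalues hn k := by
  obtain ⟨x, hxT, hxS, hx0⟩ : ∃ x ∈ span 𝕜 (hT.eigenvectorBasis hn '' Set.Iic k),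
      x ∈ span 𝕜 (hS.eigenvectorBasis hn '' Set.Ici k) ∧ x ≠ 0 := by
    by_contra! h
    have := finrank_add_finrank_le_of_disjoint (disjoint_def.2 h)
    rw [← coe_Iic, ← coe_Ici, OrthonormalBasis.finrank_span_image_finset,
      OrthonormalBasis.finrank_span_image_finset,
      Fin.card_Iic, Fin.card_Ici, hn] at this
    omega
  have hTS_x : RCLike.re ⟪T x, x⟫_𝕜 ≤ RCLike.re ⟪S x, x⟫_𝕜 := by
    simpa [inner_sub_left] using hTS.re_inner_nonneg_left x
  refine le_of_mul_le_mul_right ?_ (by positivity : 0 < ‖x‖ ^ 2)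
  exact (hT.eigenvalues_mul_norm_sq_le_re_inner hn hxT).trans <|
    hTS_x.trans (hS.re_inner_le_eigenvalues_mul_norm_sq hn hxS)

end LinearMap.IsSymmetric

namespace Matrix.IsHermitian

open scoped MatrixOrder

variable {𝕜 : Type*} [RCLike 𝕜] {m : Type*} [Fintype m] [DecidableEq m] {A B : Matrix m m 𝕜}

theorem sum_comp_eigenvalues₀ (hA : A.IsHermitian) (f : ℝ → ℝ) :
    ∑ k, f (hA.eigenvalues₀ k) = ∑ i, f (hA.eigenvalues i) :=
  ((Fintype.equivOfCardEq (Fintype.card_fin _)).symm.sum_comp (f ∘ hA.eigenvalues₀)).symm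

theorem sum_eigenvalues₀_eq_re_trace (hA : A.IsHermitian) :
    ∑ k, hA.eigenvalues₀ k = RCLike.re A.trace := by
  simpa [hA.trace_eq_sum_eigenvalues] using hA.sum_comp_eigenvalues₀ id

theorem eigenvalues₀_le_of_le (hA : A.IsHermitian) (hB : B.IsHermitian) (hAB : A ≤ B)
    (k : Fin (Fintype.card m)) : hA.eigenvalues₀ k ≤ hB.eigenvalues₀ k :=
  LinearMap.IsSymmetric.eigenvalues_le_of_le _ _ _ (by
    rwa [LinearMap.le_def, ← map_sub, Matrix.isPositive_toEuclideanLin_iff]) k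

theorem trace_cfc (hA : A.IsHermitian) (f : ℝ → ℝ) :
    (cfc f A).trace = ∑ i, (f (hA.eigenvalues i) : 𝕜) := by
  rw [hA.cfc_eq, IsHermitian.cfc, Unitary.conjStarAlgAut_apply, trace_mul_cycle,
    Unitary.coe_star_mul_self, one_mul, trace_diagonal]
  rfl

theorem re_trace_posPart_add_re_trace_negPart (hA : A.IsHermitian) :
    RCLike.re A⁺.trace + RCLike.re A⁻.trace = ∑ i, |hA.eigenvalues i| := by
  rw [CFC.posPart_def, CFC.negPart_def, cfcₙ_eq_cfc, cfcₙ_eq_cfc, hA.trace_cfc, hA.trace_cfc]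
  simp [← sum_add_distrib, posPart_add_negPart]

theorem sum_abs_eigenvalues₀_sub_le (hA : A.IsHermitian) (hB : B.IsHermitian) :
    ∑ k, |hA.eigenvalues₀ k - hB.eigenvalues₀ k| ≤ ∑ i, |(hA.sub hB).eigenvalues i| := by
  set C := A - B
  have hM : (A + C⁻).IsHermitian := hA.add (nonneg_iff_posSemidef.1 (CFC.negPart_nonneg C)).1
  have hMA : A + C⁻ = B + C⁺ := by
    rw [add_comm B, ← sub_eq_sub_iff_add_eq_add, CFC.posPart_sub_negPart C (hA.sub hB)]
  have hAM : A ≤ A + C⁻ := le_add_of_nonneg_right (CFC.negPart_nonneg C)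
  have hBM : B ≤ A + C⁻ := hMA ▸ le_add_of_nonneg_right (CFC.posPart_nonneg C)
  calc ∑ k, |hA.eigenvalues₀ k - hB.eigenvalues₀ k|
      ≤ ∑ k, ((hM.eigenvalues₀ k - hA.eigenvalues₀ k) + (hM.eigenvalues₀ k - hB.eigenvalues₀ k)) :=
        sum_le_sum fun k _ => by
          have := eigenvalues₀_le_of_le hA hM hAM k
          have := eigenvalues₀_le_of_le hB hM hBM k
          rw [abs_sub_le_iff]; constructor <;> linarith
    _ = RCLike.re C⁺.trace + RCLike.re C⁻.trace := by
        have := congrArg (fun X => RCLike.re X.trace) hMA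
        simp only [sum_add_distrib, sum_sub_distrib, sum_eigenvalues₀_eq_re_trace, trace_add,
          map_add] at this ⊢
        linarith
    _ = ∑ i, |(hA.sub hB).eigenvalues i| := (hA.sub hB).re_trace_posPart_add_re_trace_negPart

end Matrix.IsHermitian

theorem Matrix.PosSemidef.eigenvalues₀_nonneg {𝕜 m : Type*} [RCLike 𝕜] [Fintype m] [DecidableEq m]
    {A : Matrix m m 𝕜} (hA : A.PosSemidef) (k : Fin (Fintype.card m)) :
    0 ≤ hA.1.eigenvalues₀ k :=
  (isPositive_toEuclideanLin_iff.2 hA).nonneg_eigenvalues _ k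

/-- Fannes' inequality: density matrices close in trace norm have close entropies. -/
theorem fannes_inequality {D : ℕ} (θ : ℝ)
    (ρ σ : Matrix (Fin D) (Fin D) ℂ)
    (hρ : ρ.PosSemidef) (hρ1 : ρ.trace = 1)
    (hσ : σ.PosSemidef) (hσ1 : σ.trace = 1)
    (hθe : θ ≤ 1 / Real.exp 1)
    (hclose : traceNormH (hρ.1.sub hσ.1) ≤ θ) :
    |vnEntropy hρ.1 - vnEntropy hσ.1| ≤ θ * Real.log D + binEnt θ := by
  have hθ : θ ≤ Real.exp (-1) := by rwa [Real.exp_neg, ← one_div]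
  have hθ0 : 0 ≤ θ := (sum_nonneg fun i _ => abs_nonneg _).trans hclose
  have hθ1 : θ ≤ 1 := hθ.trans (Real.exp_le_one_iff.2 (by norm_num))
  calc |vnEntropy hρ.1 - vnEntropy hσ.1|
      = |∑ k, Real.negMulLog (hρ.1.eigenvalues₀ k) -
          ∑ k, Real.negMulLog (hσ.1.eigenvalues₀ k)| := by
        simp only [vnEntropy, ← IsHermitian.sum_comp_eigenvalues₀]
    _ ≤ θ * Real.log (Fintype.card (Fin (Fintype.card (Fin D)))) + Real.negMulLog θ :=
        Real.abs_sum_negMulLog_sub_sum_negMulLog_le hρ.eigenvalues₀_nonneg hσ.eigenvalues₀_nonneg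
          (by simp [IsHermitian.sum_eigenvalues₀_eq_re_trace hρ.1, hρ1])
          (by simp [IsHermitian.sum_eigenvalues₀_eq_re_trace hσ.1, hσ1])
          ((IsHermitian.sum_abs_eigenvalues₀_sub_le hρ.1 hσ.1).trans hclose) hθ
    _ ≤ θ * Real.log D + binEnt θ := by
        simp only [Fintype.card_fin, binEnt]
        linarith [Real.negMulLog_nonneg (x := 1 - θ) (by linarith) (by linarith)]
end

section
/- If ensembles satisfy (1−θ)T₀ ≤ T ≤ (1+θ)T₀ as an inequality of Choi–Jamiołkowski operators, i.e., (1−θ)Ω₀ ≤ Ω ≤ (1+θ)Ω₀ in the positive semidefinite order, then for every density matrix ρ₁₂ on C^d ⊗ C^m, ‖(T ⊗ id)(ρ₁₂) − (T₀ ⊗ id)(ρ₁₂)‖₁ ≤ 2θ. -/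
open Matrix Kronecker BigOperators
open scoped ComplexOrder

/-- The action of `T ⊗ id` on a bipartite matrix, applying `T` to the first factor. -/
noncomputable def applyFirst {d m : ℕ}
    (T : Matrix (Fin d) (Fin d) ℂ →ₗ[ℂ] Matrix (Fin d) (Fin d) ℂ)
    (M : Matrix (Fin d × Fin m) (Fin d × Fin m) ℂ) :
    Matrix (Fin d × Fin m) (Fin d × Fin m) ℂ :=
  Matrix.of (fun p q => (T (Matrix.of fun a b => M (a, p.2) (b, q.2))) p.1 q.1)

/-- Trace norm: the sum of singular values of `A`. -/
noncomputable def traceNorm {n : Type*} [Fintype n] [DecidableEq n]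
    (A : Matrix n n ℂ) : ℝ :=
  ∑ i, Real.sqrt ((Matrix.isHermitian_mul_conjTranspose_self Aᴴ).eigenvalues i)

/-!
The map `T − T₀` splits as `(T − (1 − θ) T₀) − θ T₀`. The Choi matrix of `Λ = T − (1 − θ) T₀`
is positive semidefinite by hypothesis, and Choi's identity: for `ρ = Bᴴ B`,
`(Λ ⊗ id)(ρ) = ∑ₛ (1 ⊗ Rₛ)ᴴ (d • Ω_Λ) (1 ⊗ Rₛ)` with `Rₛ` the row `s` of `B` reshaped,
shows that `Λ ⊗ id` maps `ρ` to a positive semidefinite matrix. Both pieces of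
`(T ⊗ id)(ρ) − (T₀ ⊗ id)(ρ)` are thus positive semidefinite, of trace `θ` by trace preservation.
Finally `‖P − Q‖₁ ≤ tr P + tr Q` for positive semidefinite `P, Q`: in an eigenbasis of `P − Q`
each eigenvalue is a difference of two nonnegative diagonal entries of `P` and `Q`.
-/

section ApplyFirst

variable {d m : ℕ} (Λ : Matrix (Fin d) (Fin d) ℂ →ₗ[ℂ] Matrix (Fin d) (Fin d) ℂ)

theorem applyFirst_apply (M : Matrix (Fin d × Fin m) (Fin d × Fin m) ℂ) (i j : Fin d)
    (k l : Fin m) :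
    applyFirst Λ M (i, k) (j, l) = ∑ a, ∑ b, M (a, k) (b, l) * Λ (single a b 1) i j := by
  rw [applyFirst, of_apply, matrix_eq_sum_single (of _)]
  simp only [map_sum, Matrix.sum_apply]
  refine Finset.sum_congr rfl fun a _ => Finset.sum_congr rfl fun b _ => ?_
  have hab : single a b (M (a, k) (b, l)) = M (a, k) (b, l) • single a b 1 := by
    rw [smul_single, smul_eq_mul, mul_one]
  rw [of_apply, hab, map_smul, Matrix.smul_apply, smul_eq_mul]

theorem applyFirst_sub (Λ' : Matrix (Fin d) (Fin d) ℂ →ₗ[ℂ] Matrix (Fin d) (Fin d) ℂ)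
    (M : Matrix (Fin d × Fin m) (Fin d × Fin m) ℂ) :
    applyFirst (Λ - Λ') M = applyFirst Λ M - applyFirst Λ' M := by
  ext; simp [applyFirst]

theorem applyFirst_smul (c : ℂ) (M : Matrix (Fin d × Fin m) (Fin d × Fin m) ℂ) :
    applyFirst (c • Λ) M = c • applyFirst Λ M := by
  ext; simp [applyFirst]

theorem trace_applyFirst (hΛ : ∀ X, (Λ X).trace = X.trace)
    (M : Matrix (Fin d × Fin m) (Fin d × Fin m) ℂ) : (applyFirst Λ M).trace = M.trace := by
  simp only [trace, diag, Fintype.sum_prod_type]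
  rw [Finset.sum_comm, Finset.sum_comm (f := fun a k => M (a, k) (a, k))]
  exact Finset.sum_congr rfl fun k _ => hΛ (of fun a b => M (a, k) (b, k))

theorem natCast_mul_applyFirst_maxEnt_apply (i j a b : Fin d) :
    (d : ℂ) * applyFirst Λ (maxEnt d) (i, a) (j, b) = Λ (single a b 1) i j := by
  have hd : (d : ℂ) ≠ 0 := Nat.cast_ne_zero.mpr (Fin.pos i).ne'
  simp [applyFirst_apply, maxEnt, ite_and, Finset.sum_ite_eq', hd]

theorem applyFirst_conjTranspose_mul_self {S : Type*} [Fintype S]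
    (B : Matrix S (Fin d × Fin m) ℂ) :
    applyFirst Λ (Bᴴ * B) =
      ∑ s, ((1 : Matrix (Fin d) (Fin d) ℂ) ⊗ₖ of (Function.curry (B s)))ᴴ *
        ((d : ℂ) • applyFirst Λ (maxEnt d)) *
        ((1 : Matrix (Fin d) (Fin d) ℂ) ⊗ₖ of (Function.curry (B s))) := by
  ext ⟨i, k⟩ ⟨j, l⟩
  rw [applyFirst_apply]
  simp only [Matrix.sum_apply, mul_apply, Fintype.sum_prod_type, Matrix.smul_apply, smul_eq_mul,
    natCast_mul_applyFirst_maxEnt_apply, kroneckerMap_apply, conjTranspose_apply, one_apply,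
    of_apply, Function.curry_apply, apply_ite star, star_zero, one_mul, ite_mul, mul_ite,
    zero_mul, mul_zero, Finset.sum_mul, Finset.sum_ite_irrel, Finset.sum_const_zero,
    Finset.sum_ite_eq', Finset.mem_univ, if_true]
  conv_lhs => enter [2, a]; rw [Finset.sum_comm]
  rw [Finset.sum_comm]
  conv_lhs => enter [2, s]; rw [Finset.sum_comm]
  exact Finset.sum_congr rfl fun _ _ => Finset.sum_congr rfl fun _ _ =>
    Finset.sum_congr rfl fun _ _ => by ring

open scoped MatrixOrder in
theorem posSemidef_applyFirst_of_posSemidef_choi (hΛ : (applyFirst Λ (maxEnt d)).PosSemidef)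
    {ρ : Matrix (Fin d × Fin m) (Fin d × Fin m) ℂ} (hρ : ρ.PosSemidef) :
    (applyFirst Λ ρ).PosSemidef := by
  obtain ⟨B, rfl⟩ := CStarAlgebra.nonneg_iff_eq_star_mul_self.mp hρ.nonneg
  rw [star_eq_conjTranspose, applyFirst_conjTranspose_mul_self]
  exact posSemidef_sum _ fun s _ =>
    (hΛ.smul (Nat.cast_nonneg' d)).conjTranspose_mul_mul_same _

end ApplyFirst

theorem Matrix.IsHermitian.sum_eigenvalues_eq_of_eq_cfc {𝕜 n : Type*} [RCLike 𝕜] [Fintype n]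
    [DecidableEq n] {A B : Matrix n n 𝕜} (hA : A.IsHermitian) (hB : B.IsHermitian)
    {f : ℝ → ℝ} (hBA : B = cfc f A) (g : ℝ → ℝ) :
    ∑ i, g (hB.eigenvalues i) = ∑ i, g (f (hA.eigenvalues i)) := by
  subst hBA
  have hroots := hB.roots_charpoly_eq_eigenvalues
  rw [hA.charpoly_cfc_eq, Polynomial.roots_prod _ _
    (by simp [Finset.prod_ne_zero_iff, Polynomial.X_sub_C_ne_zero])] at hroots
  simpa using (congrArg (fun s => (s.map (g ∘ RCLike.re)).sum) hroots).symm

theorem traceNorm_eq_sum_abs_eigenvalues {n : Type*} [Fintype n] [DecidableEq n]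
    {X : Matrix n n ℂ} (hX : X.IsHermitian) : traceNorm X = ∑ i, |hX.eigenvalues i| := by
  have hsq : Xᴴ * Xᴴᴴ = cfc (· ^ 2 : ℝ → ℝ) X := by
    rw [cfc_pow_id X 2 hX.isSelfAdjoint, conjTranspose_conjTranspose, hX.eq, sq]
  simp only [traceNorm, hX.sum_eigenvalues_eq_of_eq_cfc _ hsq Real.sqrt, Real.sqrt_sq_eq_abs]

theorem traceNorm_sub_le_of_posSemidef {n : Type*} [Fintype n] [DecidableEq n]
    {P Q : Matrix n n ℂ} (hP : P.PosSemidef) (hQ : Q.PosSemidef) :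
    traceNorm (P - Q) ≤ P.trace.re + Q.trace.re := by
  have hX : (P - Q).IsHermitian := hP.isHermitian.sub hQ.isHermitian
  have hdiag := hX.conjStarAlgAut_star_eigenvectorUnitary
  rw [Unitary.conjStarAlgAut_star_apply] at hdiag
  set U : Matrix n n ℂ := (hX.eigenvectorUnitary : Matrix n n ℂ)
  have htrace (M : Matrix n n ℂ) : (Uᴴ * M * U).trace = M.trace := by
    rw [trace_mul_cycle, ← star_eq_conjTranspose,
      Unitary.mul_star_self_of_mem hX.eigenvectorUnitary.2, one_mul]
  have heig (i : n) : (hX.eigenvalues i : ℂ) = (Uᴴ * P * U) i i - (Uᴴ * Q * U) i i := by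
    simpa [star_eq_conjTranspose, mul_sub, sub_mul] using (congrFun₂ hdiag i i).symm
  have habs (i : n) : |hX.eigenvalues i| ≤ ((Uᴴ * P * U) i i).re + ((Uᴴ * Q * U) i i).re := by
    have hPi := (hP.conjTranspose_mul_mul_same U).diag_nonneg (i := i)
    have hQi := (hQ.conjTranspose_mul_mul_same U).diag_nonneg (i := i)
    have hre := congrArg Complex.re (heig i)
    rw [Complex.nonneg_iff] at hPi hQi
    rw [Complex.ofReal_re, Complex.sub_re] at hre
    rw [abs_le]
    constructor <;> linarith [hPi.1, hQi.1]
  calc traceNorm (P - Q) = ∑ i, |hX.eigenvalues i| := traceNorm_eq_sum_abs_eigenvalues hX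
    _ ≤ ∑ i, (((Uᴴ * P * U) i i).re + ((Uᴴ * Q * U) i i).re) :=
        Finset.sum_le_sum fun i _ => habs i
    _ = (Uᴴ * P * U).trace.re + (Uᴴ * Q * U).trace.re := by
      simp only [trace, diag, Complex.re_sum, Finset.sum_add_distrib]
    _ = P.trace.re + Q.trace.re := by rw [htrace, htrace]

theorem choi_sandwich_implies_trace_norm_close_general {d m : ℕ} (θ : ℝ) (hθ : 0 ≤ θ)
    (T T₀ : Matrix (Fin d) (Fin d) ℂ →ₗ[ℂ] Matrix (Fin d) (Fin d) ℂ)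
    (hCP₀ : ∀ (m' : ℕ) (ρ : Matrix (Fin d × Fin m') (Fin d × Fin m') ℂ),
      ρ.PosSemidef → (applyFirst T₀ ρ).PosSemidef)
    (hTP : ∀ ρ : Matrix (Fin d) (Fin d) ℂ, (T ρ).trace = ρ.trace)
    (hTP₀ : ∀ ρ : Matrix (Fin d) (Fin d) ℂ, (T₀ ρ).trace = ρ.trace)
    (hlow : (applyFirst T (maxEnt d) - ((1 - θ : ℝ) : ℂ) • applyFirst T₀ (maxEnt d)).PosSemidef)
    (ρ : Matrix (Fin d × Fin m) (Fin d × Fin m) ℂ)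
    (hρ : ρ.PosSemidef) (hρ1 : ρ.trace = 1) :
    traceNorm (applyFirst T ρ - applyFirst T₀ ρ) ≤ 2 * θ := by
  set c : ℂ := ((1 - θ : ℝ) : ℂ)
  have hP : (applyFirst (T - c • T₀) ρ).PosSemidef := by
    refine posSemidef_applyFirst_of_posSemidef_choi _ ?_ hρ
    rwa [applyFirst_sub, applyFirst_smul]
  have hQ : ((θ : ℂ) • applyFirst T₀ ρ).PosSemidef :=
    (hCP₀ m ρ hρ).smul (Complex.zero_le_real.mpr hθ)
  have hsplit : applyFirst T ρ - applyFirst T₀ ρ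
      = applyFirst (T - c • T₀) ρ - (θ : ℂ) • applyFirst T₀ ρ := by
    rw [applyFirst_sub, applyFirst_smul]
    simp only [c, Complex.ofReal_sub, Complex.ofReal_one]
    module
  have htrP : (applyFirst (T - c • T₀) ρ).trace = θ := by
    rw [applyFirst_sub, applyFirst_smul, trace_sub, trace_smul, trace_applyFirst T hTP,
      trace_applyFirst T₀ hTP₀, hρ1]
    simp [c]
  have htrQ : ((θ : ℂ) • applyFirst T₀ ρ).trace = θ := by
    rw [trace_smul, trace_applyFirst T₀ hTP₀, hρ1, smul_eq_mul, mul_one]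
  calc traceNorm (applyFirst T ρ - applyFirst T₀ ρ)
      ≤ (applyFirst (T - c • T₀) ρ).trace.re + ((θ : ℂ) • applyFirst T₀ ρ).trace.re :=
        hsplit ▸ traceNorm_sub_le_of_posSemidef hP hQ
    _ = 2 * θ := by rw [htrP, htrQ, Complex.ofReal_re]; ring

/-- If the Choi operators of two CPTP maps satisfy `(1−θ)Ω₀ ≤ Ω ≤ (1+θ)Ω₀`, then on
every bipartite density matrix the outputs of `T ⊗ id` and `T₀ ⊗ id` are within trace
distance `2θ`. -/
theorem choi_sandwich_implies_trace_norm_close {d m : ℕ} (θ : ℝ) (hθ : 0 ≤ θ)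
    (T T₀ : Matrix (Fin d) (Fin d) ℂ →ₗ[ℂ] Matrix (Fin d) (Fin d) ℂ)
    (hCP : ∀ (m' : ℕ) (ρ : Matrix (Fin d × Fin m') (Fin d × Fin m') ℂ),
      ρ.PosSemidef → (applyFirst T ρ).PosSemidef)
    (hCP₀ : ∀ (m' : ℕ) (ρ : Matrix (Fin d × Fin m') (Fin d × Fin m') ℂ),
      ρ.PosSemidef → (applyFirst T₀ ρ).PosSemidef)
    (hTP : ∀ ρ : Matrix (Fin d) (Fin d) ℂ, (T ρ).trace = ρ.trace)
    (hTP₀ : ∀ ρ : Matrix (Fin d) (Fin d) ℂ, (T₀ ρ).trace = ρ.trace)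
    (hlow : (applyFirst T (maxEnt d) - ((1 - θ : ℝ) : ℂ) • applyFirst T₀ (maxEnt d)).PosSemidef)
    (hhigh : (((1 + θ : ℝ) : ℂ) • applyFirst T₀ (maxEnt d) - applyFirst T (maxEnt d)).PosSemidef)
    (ρ : Matrix (Fin d × Fin m) (Fin d × Fin m) ℂ)
    (hρ : ρ.PosSemidef) (hρ1 : ρ.trace = 1) :
    traceNorm (applyFirst T ρ - applyFirst T₀ ρ) ≤ 2 * θ :=
  choi_sandwich_implies_trace_norm_close_general θ hθ T T₀ hCP₀ hTP hTP₀ hlow ρ hρ hρ1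
end

section
/- For every unitary U on C^d with tr(U) = 0, the channel ρ ↦ ∫ dV V† U (V ρ V†) U† V averaged over a unitary 2-design {(p_k, V_k)} equals ρ ↦ (1/(d²−1))(d²·(I/d) − ρ) = (1/(d²−1))(d·I − ρ). -/
open Matrix Kronecker BigOperators
open scoped ComplexOrder

/-!
The twirl is symmetric for the trace pairing `(X, Y) ↦ tr (X * Y)`, so a 2-design also twirls
under conjugation by `(V ⊗ V̄)ᴴ`. The effective channel has natural representation
`∑ₖ pₖ Wₖ ⊗ W̄ₖ` with `Wₖ = Vₖᴴ U Vₖ`, which is therefore `twirl (U ⊗ Ū)`. For a unitary `U`,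
`tr ((U ⊗ Ū) Φ) = tr (U Uᴴ) / d = 1`, while `tr (U ⊗ Ū) = tr U · tr Ū = 0`; hence
`twirl (U ⊗ Ū) = Φ - (I - Φ) / (d² - 1)`, and `Φ`, `I` represent `ρ ↦ tr ρ • I / d` and `ρ ↦ ρ`.
-/

namespace Matrix

variable {ι n R : Type*} [Fintype n]

theorem sum_smul_mul_mul_swap_of_trace_symm [Fintype ι] [CommSemiring R] (c : ι → R)
    (A B : ι → Matrix n n R) {T : Matrix n n R → Matrix n n R}
    (hT : ∀ X Y, (T X * Y).trace = (X * T Y).trace)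
    (h : ∀ X, ∑ k, c k • (A k * X * B k) = T X) (Y : Matrix n n R) :
    ∑ k, c k • (B k * Y * A k) = T Y := by
  rw [ext_iff_trace_mul_left]
  intro X
  calc (X * ∑ k, c k • (B k * Y * A k)).trace
      = ∑ k, c k * (A k * X * B k * Y).trace := by
        simp only [Matrix.mul_sum, Matrix.mul_smul, trace_sum, trace_smul, smul_eq_mul]
        refine Finset.sum_congr rfl fun k _ => congrArg (c k * ·) ?_
        simp only [← Matrix.mul_assoc]
        rw [trace_mul_comm]
        simp only [Matrix.mul_assoc]
    _ = (T X * Y).trace := by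
        simp only [← h X, Matrix.sum_mul, Matrix.smul_mul, trace_sum, trace_smul, smul_eq_mul]
    _ = (X * T Y).trace := hT X Y

variable [CommSemiring R]

/-- The linear map on `n × n` matrices whose matrix, in the basis of matrix units, is `M`. -/
def superop : Matrix (n × n) (n × n) R →ₗ[R] Matrix n n R → Matrix n n R where
  toFun M ρ := of fun i j => (M *ᵥ fun p => ρ p.1 p.2) (i, j)
  map_add' M N := by ext; simp [add_mulVec]
  map_smul' c M := by ext; simp [smul_mulVec]

theorem superop_kronecker (A B ρ : Matrix n n R) : superop (A ⊗ₖ B) ρ = A * ρ * Bᵀ := by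
  ext i j
  simp only [superop, LinearMap.coe_mk, AddHom.coe_mk, of_apply, mulVec,
    dotProduct, Fintype.sum_prod_type, kroneckerMap_apply,
    mul_apply, transpose_apply, Finset.sum_mul]
  rw [Finset.sum_comm]
  exact Finset.sum_congr rfl fun b _ => Finset.sum_congr rfl fun a _ => by ring

theorem superop_one [DecidableEq n] (ρ : Matrix n n R) : superop 1 ρ = ρ := by
  ext i j
  simp [superop]

end Matrix

section

variable {d : ℕ}

theorem superop_maxEnt (ρ : Matrix (Fin d) (Fin d) ℂ) :
    superop (maxEnt d) ρ = (ρ.trace / d) • 1 := by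
  ext i j
  by_cases h : i = j
  · simp [superop, maxEnt, mulVec, dotProduct, Fintype.sum_prod_type, h, trace, div_eq_inv_mul,
      Finset.mul_sum]
  · simp [superop, maxEnt, mulVec, dotProduct, Fintype.sum_prod_type, h]

theorem conjMat_mul (A B : Matrix (Fin d) (Fin d) ℂ) :
    conjMat (A * B) = conjMat A * conjMat B :=
  Matrix.map_mul

theorem conjMat_conjTranspose (A : Matrix (Fin d) (Fin d) ℂ) : conjMat Aᴴ = (conjMat A)ᴴ := by
  ext i j
  simp [conjMat]

theorem transpose_conjMat (A : Matrix (Fin d) (Fin d) ℂ) : (conjMat A)ᵀ = Aᴴ := rfl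

theorem kronecker_conjMat_mul (A B : Matrix (Fin d) (Fin d) ℂ) :
    A ⊗ₖ conjMat A * B ⊗ₖ conjMat B = (A * B) ⊗ₖ conjMat (A * B) := by
  rw [conjMat_mul, mul_kronecker_mul]

theorem conjTranspose_kronecker_conjMat (A : Matrix (Fin d) (Fin d) ℂ) :
    (A ⊗ₖ conjMat A)ᴴ = Aᴴ ⊗ₖ conjMat Aᴴ := by
  rw [conjTranspose_kronecker, conjMat_conjTranspose]

theorem trace_kronecker_conjMat_mul_maxEnt (A B : Matrix (Fin d) (Fin d) ℂ) :
    (A ⊗ₖ conjMat B * maxEnt d).trace = (A * Bᴴ).trace / d := by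
  simp [trace, mul_apply, maxEnt, conjMat, Fintype.sum_prod_type, div_eq_mul_inv, Finset.sum_mul,
    ite_and]

theorem trace_twirl_mul (X Y : Matrix (Fin d × Fin d) (Fin d × Fin d) ℂ) :
    (twirl X * Y).trace = (X * twirl Y).trace := by
  simp only [twirl, Matrix.add_mul, Matrix.mul_add, Matrix.smul_mul, Matrix.mul_smul,
    trace_add, trace_smul, smul_eq_mul]
  rw [trace_mul_comm (maxEnt d) Y, trace_mul_comm (1 - maxEnt d) Y,
    trace_mul_comm X (maxEnt d), trace_mul_comm X (1 - maxEnt d)]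
  ring

theorem twirl_kronecker_conjMat_of_trace_eq_zero (hd : d ≠ 0) {U : Matrix (Fin d) (Fin d) ℂ}
    (hU : U ∈ unitaryGroup (Fin d) ℂ) (hU0 : U.trace = 0) :
    twirl (U ⊗ₖ conjMat U) = maxEnt d - (1 / ((d : ℂ) ^ 2 - 1)) • (1 - maxEnt d) := by
  have hΦ : (U ⊗ₖ conjMat U * maxEnt d).trace = 1 := by
    rw [trace_kronecker_conjMat_mul_maxEnt, ← star_eq_conjTranspose,
      mem_unitaryGroup_iff.mp hU]
    simp [hd]
  have hI : (U ⊗ₖ conjMat U).trace = 0 := by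
    rw [trace_kronecker, hU0, zero_mul]
  rw [twirl, hΦ, Matrix.mul_sub, Matrix.mul_one, trace_sub, hI, hΦ, one_smul, zero_sub, neg_div, neg_smul, ← sub_eq_add_neg]

end

theorem traceless_unitary_effective_channel_general {d N : ℕ} (hd : 2 ≤ d)
    (p : Fin N → ℝ)
    (V : Fin N → Matrix (Fin d) (Fin d) ℂ)
    (hdesign : ∀ X : Matrix (Fin d × Fin d) (Fin d × Fin d) ℂ,
      ∑ k, (p k : ℂ) • ((V k ⊗ₖ conjMat (V k)) * X * (V k ⊗ₖ conjMat (V k))ᴴ) = twirl X)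
    (U : Matrix (Fin d) (Fin d) ℂ) (hU : U ∈ Matrix.unitaryGroup (Fin d) ℂ)
    (hU0 : U.trace = 0)
    (ρ : Matrix (Fin d) (Fin d) ℂ) (hρ1 : ρ.trace = 1) :
    ∑ k, (p k : ℂ) • ((V k)ᴴ * U * V k * ρ * (V k)ᴴ * Uᴴ * V k) =
      (1 / ((d : ℂ) ^ 2 - 1)) • ((d : ℂ) • (1 : Matrix (Fin d) (Fin d) ℂ) - ρ) := by
  have hd0 : (d : ℂ) ≠ 0 := by exact_mod_cast (by omega : d ≠ 0)
  have hd1 : (d : ℂ) ^ 2 - 1 ≠ 0 := by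
    rw [sub_ne_zero]
    exact_mod_cast (by nlinarith : d ^ 2 ≠ 1)
  have hadj := sum_smul_mul_mul_swap_of_trace_symm _ _ _ trace_twirl_mul hdesign (U ⊗ₖ conjMat U)
  calc ∑ k, (p k : ℂ) • ((V k)ᴴ * U * V k * ρ * (V k)ᴴ * Uᴴ * V k)
      = superop (∑ k, (p k : ℂ) • ((V k ⊗ₖ conjMat (V k))ᴴ * (U ⊗ₖ conjMat U) *
          (V k ⊗ₖ conjMat (V k)))) ρ := by
        simp only [map_sum, map_smul, Finset.sum_apply, Pi.smul_apply,
          conjTranspose_kronecker_conjMat, kronecker_conjMat_mul, superop_kronecker,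
          transpose_conjMat, conjTranspose_mul, conjTranspose_conjTranspose, Matrix.mul_assoc]
    _ = superop (maxEnt d - (1 / ((d : ℂ) ^ 2 - 1)) • (1 - maxEnt d)) ρ := by
        rw [hadj, twirl_kronecker_conjMat_of_trace_eq_zero (by omega) hU hU0]
    _ = (1 / ((d : ℂ) ^ 2 - 1)) • ((d : ℂ) • (1 : Matrix (Fin d) (Fin d) ℂ) - ρ) := by
        simp only [map_sub, map_smul, Pi.sub_apply, Pi.smul_apply, superop_maxEnt, superop_one,
          hρ1]
        ext i j
        by_cases h : i = j
        · simp only [h, Matrix.sub_apply, Matrix.smul_apply, one_apply_eq, smul_eq_mul, mul_one]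
          field_simp
          ring
        · simp [h]

/-- A traceless unitary applied between encryption and decryption by a unitary 2-design
induces the effective channel `ρ ↦ (1/(d²−1))(d·I − ρ)` on density matrices. -/
theorem traceless_unitary_effective_channel {d N : ℕ} (hd : 2 ≤ d)
    (p : Fin N → ℝ) (hp : ∀ k, 0 ≤ p k) (hp1 : ∑ k, p k = 1)
    (V : Fin N → Matrix (Fin d) (Fin d) ℂ)
    (hV : ∀ k, V k ∈ Matrix.unitaryGroup (Fin d) ℂ)
    (hdesign : ∀ X : Matrix (Fin d × Fin d) (Fin d × Fin d) ℂ,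
      ∑ k, (p k : ℂ) • ((V k ⊗ₖ conjMat (V k)) * X * (V k ⊗ₖ conjMat (V k))ᴴ) = twirl X)
    (U : Matrix (Fin d) (Fin d) ℂ) (hU : U ∈ Matrix.unitaryGroup (Fin d) ℂ)
    (hU0 : U.trace = 0)
    (ρ : Matrix (Fin d) (Fin d) ℂ) (hρ : ρ.PosSemidef) (hρ1 : ρ.trace = 1) :
    ∑ k, (p k : ℂ) • ((V k)ᴴ * U * V k * ρ * (V k)ᴴ * Uᴴ * V k) =
      (1 / ((d : ℂ) ^ 2 - 1)) • ((d : ℂ) • (1 : Matrix (Fin d) (Fin d) ℂ) - ρ) :=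
  traceless_unitary_effective_channel_general hd p V hdesign U hU hU0 ρ hρ1
end
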